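/- arXiv:2104.03055 — 4 statements merged into one kernel-verified Lean document; each statement's English description precedes it below -/
import Mathlib

section
/- For every positive integer m, the lettericity of the co-matching, i.e., the complement of the perfect matching mK₂, is exactly m: ℓ((mK₂)ᶜ) = m. In particular, the family of co-matchings has unbounded lettericity. -/
/-- A `k`-lettering of a graph `G`: a decoder `D ⊆ Fin k × Fin k`, a letter
assignment `L`, and an injective ordering `ord` such that for `ord u < ord v`,
`u` and `v` are adjacent iff `(L u, L v) ∈ D`. -/
def HasLettering {V : Type*} (G : SimpleGraph V) (k : ℕ) : Prop :=
  ∃ (D : Set (Fin k × Fin k)) (L : V → Fin k) (ord : V → ℕ),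
    Function.Injective ord ∧
    ∀ u v : V, u ≠ v → ord u < ord v → (G.Adj u v ↔ (L u, L v) ∈ D)

/-- The lettericity of a graph: the least `k` such that it has a `k`-lettering. -/
noncomputable def lettericity {V : Type*} (G : SimpleGraph V) : ℕ :=
  sInf {k | HasLettering G k}

/-- The matching `mK₂`: the disjoint union of `m` single edges. -/
def matchingGraph (m : ℕ) : SimpleGraph (Fin m × Fin 2) where
  Adj a b := a.1 = b.1 ∧ a.2 ≠ b.2
  symm := ⟨by rintro a b ⟨h1, h2⟩; exact ⟨h1.symm, h2.symm⟩⟩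
  loopless := ⟨by rintro a ⟨h1, h2⟩; exact h2 rfl⟩

/-!
The `m` edges of `mK₂` force `m` letters: in a lettering, let `a i` be the earlier and `b i`
the later endpoint of the `i`-th edge. If `a i` and `a j` (`i ≠ j`) had the same letter and,
say, `b j` came after `b i`, then `a i` and `a j` would both precede `b j` with the same letter,
so they would see `b j` alike; but in the co-matching `a i` is adjacent to `b j` and `a j` is not.
Conversely, lettering each vertex by its edge, with decoder "different letters", works.
-/

section Lettering

variable {V : Type*} {G : SimpleGraph V} {k : ℕ}

lemma lettericity_eq_of_hasLettering (h : HasLettering G k)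
    (hmin : ∀ n, HasLettering G n → k ≤ n) : lettericity G = k :=
  le_antisymm (Nat.sInf_le h) (le_csInf ⟨k, h⟩ hmin)

lemma hasLettering_of_adj_iff [Countable V] (D : Set (Fin k × Fin k)) (L : V → Fin k)
    (hG : ∀ u v, u ≠ v → (G.Adj u v ↔ (L u, L v) ∈ D)) : HasLettering G k := by
  obtain ⟨ord, hord⟩ := Countable.exists_injective_nat V
  exact ⟨D, L, ord, hord, fun u v huv _ => hG u v huv⟩

lemma adj_iff_adj_of_letter_eq {D : Set (Fin k × Fin k)} {L : V → Fin k} {ord : V → ℕ}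
    (h : ∀ u v, u ≠ v → ord u < ord v → (G.Adj u v ↔ (L u, L v) ∈ D)) {u u' v : V}
    (hu : ord u < ord v) (hu' : ord u' < ord v) (hL : L u = L u') :
    G.Adj u v ↔ G.Adj u' v := by
  rw [h u v (fun e => hu.ne (congrArg ord e)) hu, h u' v (fun e => hu'.ne (congrArg ord e)) hu', hL]

end Lettering

lemma compl_matchingGraph_adj {m : ℕ} {a b : Fin m × Fin 2} :
    (matchingGraph m)ᶜ.Adj a b ↔ a.1 ≠ b.1 := by
  rw [SimpleGraph.compl_adj]
  constructor
  · rintro ⟨hab, hnadj⟩ h1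
    exact hnadj ⟨h1, fun h2 => hab (Prod.ext h1 h2)⟩
  · exact fun h1 => ⟨fun hab => h1 (congrArg Prod.fst hab), fun hadj => h1 hadj.1⟩

lemma hasLettering_compl_matchingGraph (m : ℕ) : HasLettering (matchingGraph m)ᶜ m :=
  hasLettering_of_adj_iff {p | p.1 ≠ p.2} Prod.fst fun _ _ _ => compl_matchingGraph_adj

lemma le_of_hasLettering_compl_matchingGraph {m k : ℕ}
    (h : HasLettering (matchingGraph m)ᶜ k) : m ≤ k := by
  obtain ⟨D, L, ord, hord, hD⟩ := h
  have hfirst : ∀ i : Fin m, ∃ e : Fin 2, ord (i, e) < ord (i, e + 1) := by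
    intro i
    rcases lt_or_gt_of_ne (hord.ne (a₁ := (i, 0)) (a₂ := (i, 1)) (by simp)) with h01 | h10
    · exact ⟨0, h01⟩
    · exact ⟨1, h10⟩
  choose e he using hfirst
  have hinj : Function.Injective fun i => L (i, e i) := by
    intro i j hL
    by_contra hij
    wlog hlt : ord (i, e i + 1) < ord (j, e j + 1) generalizing i j
    · refine this hL.symm (Ne.symm hij) (lt_of_le_of_ne (not_lt.1 hlt) fun ho => hij ?_)
      exact (congrArg Prod.fst (hord ho)).symm
    have hsame := adj_iff_adj_of_letter_eq hD ((he i).trans hlt) (he j) hL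
    simp only [compl_matchingGraph_adj] at hsame
    exact hsame.1 hij rfl
  simpa using Fintype.card_le_of_injective _ hinj

/-- For every positive integer `m`, the lettericity of the co-matching
`(mK₂)ᶜ` is exactly `m`; in particular, the family of co-matchings has
unbounded lettericity. -/
theorem lettericity_co_matching :
    (∀ m : ℕ, 0 < m → lettericity (matchingGraph m)ᶜ = m) ∧
      ∀ k : ℕ, ∃ m : ℕ, 0 < m ∧ ¬ HasLettering (matchingGraph m)ᶜ k :=
  ⟨fun m _ => lettericity_eq_of_hasLettering (hasLettering_compl_matchingGraph m)
      fun _ => le_of_hasLettering_compl_matchingGraph,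
    fun k => ⟨k + 1, k.succ_pos,
      fun h => (le_of_hasLettering_compl_matchingGraph h).not_gt k.lt_succ_self⟩⟩
end

section
/- Let m and r be positive integers. If the matching (m·r² + 1)K₂ has an r-lettering, then the matching mK₂ has a 2-lettering. -/
/-! Among `m r² + 1` edges there are, by pigeonhole, `m` edges `{(j, 0), (j, 1)}` carrying the same
pair of letters `(a, b)`. The lettering restricted to these edges uses only the two letters `a`
and `b`, each determined by the second coordinate of the vertex, so renaming `a ↦ 0` and `b ↦ 1`
gives a `2`-lettering of `mK₂`. -/

variable {V W : Type*}

def IsLettering (G : SimpleGraph V) {k : ℕ} (D : Set (Fin k × Fin k)) (L : V → Fin k)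
    (ord : V → ℕ) : Prop :=
  Function.Injective ord ∧ ∀ u v : V, u ≠ v → ord u < ord v → (G.Adj u v ↔ (L u, L v) ∈ D)

theorem hasLettering_iff_exists_isLettering (G : SimpleGraph V) (k : ℕ) :
    HasLettering G k ↔ ∃ (D : Set (Fin k × Fin k)) (L : V → Fin k) (ord : V → ℕ),
      IsLettering G D L ord :=
  Iff.rfl

namespace IsLettering

variable {G : SimpleGraph V} {H : SimpleGraph W} {k l : ℕ} {D : Set (Fin k × Fin k)}

theorem comap {L : W → Fin k} {ord : W → ℕ} (h : IsLettering H D L ord) (f : G ↪g H) :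
    IsLettering G D (L ∘ f) (ord ∘ f) := by
  refine ⟨h.1.comp f.injective, fun u v huv hlt => ?_⟩
  rw [← f.map_adj_iff]
  exact h.2 (f u) (f v) (f.injective.ne huv) hlt

theorem of_comp {L : V → Fin l} {ord : V → ℕ} {g : Fin l → Fin k}
    (h : IsLettering G D (g ∘ L) ord) : IsLettering G (Prod.map g g ⁻¹' D) L ord :=
  h

end IsLettering

theorem Fintype.exists_embedding_fin_of_mul_lt_card {α β : Type*} [Fintype α] [Fintype β]
    [DecidableEq β] (f : α → β) {n : ℕ} (hn : Fintype.card β * n < Fintype.card α) :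
    ∃ (y : β) (c : Fin n ↪ α), ∀ i, f (c i) = y := by
  obtain ⟨y, hy⟩ := Fintype.exists_lt_card_fiber_of_mul_lt_card f hn
  obtain ⟨T, hT, hTcard⟩ := Finset.exists_subset_card_eq hy.le
  refine ⟨y, (Finset.equivFinOfCardEq hTcard).symm.toEmbedding.trans (.subtype _), fun i => ?_⟩
  simpa using hT ((Finset.equivFinOfCardEq hTcard).symm i).2

def matchingGraph.embedding {m n : ℕ} (c : Fin m ↪ Fin n) : matchingGraph m ↪g matchingGraph n where
  toEmbedding := c.prodMap (Function.Embedding.refl _)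
  map_rel_iff' := by simp [matchingGraph]

@[simp]
theorem matchingGraph.embedding_apply {m n : ℕ} (c : Fin m ↪ Fin n) (x : Fin m × Fin 2) :
    matchingGraph.embedding c x = (c x.1, x.2) :=
  rfl

theorem matching_lettering_reduction_general (m r : ℕ)
    (h : HasLettering (matchingGraph (m * r ^ 2 + 1)) r) :
    HasLettering (matchingGraph m) 2 := by
  obtain ⟨D, L, ord, hL⟩ := (hasLettering_iff_exists_isLettering _ _).mp h
  obtain ⟨⟨a, b⟩, c, hc⟩ := Fintype.exists_embedding_fin_of_mul_lt_card
    (fun j => (L (j, 0), L (j, 1))) (n := m) (by simp only [Fintype.card_prod, Fintype.card_fin]; nlinarith)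
  have hletters : L ∘ matchingGraph.embedding c = ![a, b] ∘ Prod.snd := by
    funext ⟨i, e⟩
    fin_cases e
    exacts [congrArg Prod.fst (hc i), congrArg Prod.snd (hc i)]
  have hL' := hL.comap (matchingGraph.embedding c)
  rw [hletters] at hL'
  exact ⟨_, _, _, hL'.of_comp⟩

/-- If the matching `(m·r² + 1)K₂` has an `r`-lettering, then the matching
`mK₂` has a `2`-lettering. -/
theorem matching_lettering_reduction (m r : ℕ) (hm : 0 < m) (hr : 0 < r)
    (h : HasLettering (matchingGraph (m * r ^ 2 + 1)) r) :
    HasLettering (matchingGraph m) 2 :=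
  matching_lettering_reduction_general m r h
end

section
/- Let 𝒞 be a hereditary class of cographs. Then 𝒞 has bounded lettericity (there exists k such that every graph in 𝒞 has a k-lettering) if and only if 𝒞 does not contain all matchings mK₂ and does not contain all co-matchings (mK₂)ᶜ; equivalently, the lettericity of 𝒞 is infinite if and only if 𝒞 contains every matching or every co-matching. -/
namespace BddLett
attribute [local instance] Classical.propDecidable

lemma matching_adj {m : ℕ} (a b : Fin m × Fin 2) :
    (matchingGraph m).Adj a b ↔ a.1 = b.1 ∧ a.2 ≠ b.2 := Iff.rfl

lemma comatching_adj {m : ℕ} (a b : Fin m × Fin 2) :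
    ((matchingGraph m)ᶜ).Adj a b ↔ a.1 ≠ b.1 := by
  constructor
  · rintro ⟨hne, hnadj⟩
    intro h1
    apply hnadj
    refine ⟨h1, fun h2 => hne ?_⟩
    exact Prod.ext h1 h2
  · intro h1
    refine ⟨fun h => h1 (by rw [h]), fun h => h1 h.1⟩

/-- A lettering with an arbitrary alphabet type. -/
structure Lett {V : Type*} (G : SimpleGraph V) (A : Type*) where
  D : Set (A × A)
  L : V → A
  ord : V → ℕ
  inj : Function.Injective ord
  dec : ∀ u v, u ≠ v → ord u < ord v → (G.Adj u v ↔ (L u, L v) ∈ D)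

/-- A lettering with designated "dead" letter `zl` and "dominating" letter `ul`. -/
structure GLett {V : Type*} (G : SimpleGraph V) (A : Type*) extends Lett G A where
  zl : A
  ul : A
  hz : ∀ x, (zl, x) ∉ D
  hu : ∀ x, (ul, x) ∈ D

lemma hasLettering_of_GLett {V : Type*} {G : SimpleGraph V} {k : ℕ}
    (gl : GLett G (Fin k)) : HasLettering G k :=
  ⟨gl.D, gl.L, gl.ord, gl.inj, gl.dec⟩

/-- Transfer a `GLett` along an injection of alphabets. -/
def GLett.mono {V A B : Type*} {G : SimpleGraph V} (gl : GLett G A) (f : A ↪ B) :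
    GLett G B where
  D := (Prod.map f f '' gl.D) ∪ {p | p.1 = f gl.ul}
  L := f ∘ gl.L
  ord := gl.ord
  inj := gl.inj
  dec := by
    intro u v huv hord
    rw [gl.dec u v huv hord]
    constructor
    · intro h
      exact Or.inl ⟨(gl.L u, gl.L v), h, rfl⟩
    · rintro (⟨⟨a, b⟩, hab, heq⟩ | h)
      · obtain ⟨h1, h2⟩ := Prod.mk.injEq _ _ _ _ ▸ heq
        rwa [← f.injective h1, ← f.injective h2]
      · have : gl.L u = gl.ul := f.injective h
        rw [this]; exact gl.hu _
  zl := f gl.zl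
  ul := f gl.ul
  hz := by
    rintro x (⟨⟨a, b⟩, hab, heq⟩ | h)
    · have : a = gl.zl := f.injective (congrArg Prod.fst heq)
      exact gl.hz b (this ▸ hab)
    · have : gl.zl = gl.ul := f.injective h
      exact gl.hz gl.zl (this ▸ gl.hu gl.zl)
  hu := fun x => Or.inr rfl

/-- Add fresh dead/dominating letters to a plain lettering. -/
def Lett.addZU {V A : Type*} {G : SimpleGraph V} (l : Lett G A) :
    GLett G (A ⊕ Fin 2) where
  D := (Prod.map Sum.inl Sum.inl '' l.D) ∪ {p | p.1 = Sum.inr 1}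
  L := Sum.inl ∘ l.L
  ord := l.ord
  inj := l.inj
  dec := by
    intro u v huv hord
    rw [l.dec u v huv hord]
    constructor
    · intro h; exact Or.inl ⟨(l.L u, l.L v), h, rfl⟩
    · rintro (⟨⟨a, b⟩, hab, heq⟩ | h)
      · obtain ⟨h1, h2⟩ := Prod.mk.injEq _ _ _ _ ▸ heq
        rwa [← Sum.inl.inj h1, ← Sum.inl.inj h2]
      · exact absurd h (by simp)
  zl := Sum.inr 0
  ul := Sum.inr 1
  hz := by
    rintro x (⟨⟨a, b⟩, hab, heq⟩ | h)
    · exact absurd (congrArg Prod.fst heq) (by simp)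
    · simp at h
  hu := fun x => Or.inr rfl

/-- Combine letterings of the two sides of a split with uniform cross-adjacency `c`. -/
noncomputable def Lett.split {V A B : Type*} (G : SimpleGraph V) (p : V → Prop) (c : Prop)
    (hcross : ∀ u v : V, p u → ¬ p v → (G.Adj u v ↔ c))
    (l₁ : Lett (G.comap (Subtype.val : {v // p v} → V)) A)
    (l₂ : Lett (G.comap (Subtype.val : {v // ¬ p v} → V)) B) :
    Lett G (A ⊕ B) where
  D := (Prod.map Sum.inl Sum.inl '' l₁.D) ∪ (Prod.map Sum.inr Sum.inr '' l₂.D) ∪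
      {q | c ∧ ((∃ a b, q = (Sum.inl a, Sum.inr b)) ∨ (∃ a b, q = (Sum.inr b, Sum.inl a)))}
  L := fun v => if h : p v then Sum.inl (l₁.L ⟨v, h⟩) else Sum.inr (l₂.L ⟨v, h⟩)
  ord := fun v => if h : p v then 2 * l₁.ord ⟨v, h⟩ else 2 * l₂.ord ⟨v, h⟩ + 1
  inj := by
    intro u v huv
    by_cases hu : p u <;> by_cases hv : p v <;> simp only [hu, hv, dif_pos, dif_neg,
      not_false_iff] at huv
    · have := l₁.inj (by omega : l₁.ord ⟨u, hu⟩ = l₁.ord ⟨v, hv⟩)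
      exact congrArg Subtype.val this
    · omega
    · omega
    · have := l₂.inj (by omega : l₂.ord ⟨u, hu⟩ = l₂.ord ⟨v, hv⟩)
      exact congrArg Subtype.val this
  dec := by
    intro u v huv hord
    by_cases hu : p u <;> by_cases hv : p v <;>
      simp only [hu, hv, dif_pos, dif_neg, not_false_iff] at hord ⊢
    · have hne : (⟨u, hu⟩ : {v // p v}) ≠ ⟨v, hv⟩ := fun h => huv (congrArg Subtype.val h)
      have := l₁.dec ⟨u, hu⟩ ⟨v, hv⟩ hne (by omega)
      rw [SimpleGraph.comap_adj] at this
      rw [this]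
      constructor
      · intro h; exact Or.inl (Or.inl ⟨_, h, rfl⟩)
      · rintro ((⟨⟨a, b⟩, hab, heq⟩ | ⟨⟨a, b⟩, hab, heq⟩) | ⟨hc, (⟨a, b, heq⟩ | ⟨a, b, heq⟩)⟩)
        · obtain ⟨h1, h2⟩ := Prod.mk.injEq _ _ _ _ ▸ heq
          rwa [← Sum.inl.inj h1, ← Sum.inl.inj h2]
        · exact absurd (congrArg Prod.fst heq) (by simp)
        · exact absurd (congrArg Prod.snd heq) (by simp)
        · exact absurd (congrArg Prod.fst heq) (by simp)
    · rw [hcross u v hu hv]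
      constructor
      · intro h; exact Or.inr ⟨h, Or.inl ⟨_, _, rfl⟩⟩
      · rintro ((⟨⟨a, b⟩, hab, heq⟩ | ⟨⟨a, b⟩, hab, heq⟩) | ⟨hc, _⟩)
        · exact absurd (congrArg Prod.snd heq) (by simp)
        · exact absurd (congrArg Prod.fst heq) (by simp)
        · exact hc
    · have : G.Adj v u ↔ c := hcross v u hv hu
      rw [SimpleGraph.adj_comm] at this
      rw [this]
      constructor
      · intro h; exact Or.inr ⟨h, Or.inr ⟨_, _, rfl⟩⟩
      · rintro ((⟨⟨a, b⟩, hab, heq⟩ | ⟨⟨a, b⟩, hab, heq⟩) | ⟨hc, _⟩)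
        · exact absurd (congrArg Prod.fst heq) (by simp)
        · exact absurd (congrArg Prod.snd heq) (by simp)
        · exact hc
    · have hne : (⟨u, hu⟩ : {v // ¬ p v}) ≠ ⟨v, hv⟩ := fun h => huv (congrArg Subtype.val h)
      have := l₂.dec ⟨u, hu⟩ ⟨v, hv⟩ hne (by omega)
      rw [SimpleGraph.comap_adj] at this
      rw [this]
      constructor
      · intro h; exact Or.inl (Or.inr ⟨_, h, rfl⟩)
      · rintro ((⟨⟨a, b⟩, hab, heq⟩ | ⟨⟨a, b⟩, hab, heq⟩) | ⟨hc, (⟨a, b, heq⟩ | ⟨a, b, heq⟩)⟩)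
        · exact absurd (congrArg Prod.fst heq) (by simp)
        · obtain ⟨h1, h2⟩ := Prod.mk.injEq _ _ _ _ ▸ heq
          rwa [← Sum.inr.inj h1, ← Sum.inr.inj h2]
        · exact absurd (congrArg Prod.fst heq) (by simp)
        · exact absurd (congrArg Prod.snd heq) (by simp)

/-- Peel an isolated vertex. -/
noncomputable def GLett.peelIsolated {V A : Type*} {G : SimpleGraph V} (v : V)
    (hv : ∀ w, ¬ G.Adj v w)
    (gl : GLett (G.comap (Subtype.val : {w // w ≠ v} → V)) A) : GLett G A where
  D := gl.D
  L := fun w => if h : w = v then gl.zl else gl.L ⟨w, h⟩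
  ord := fun w => if h : w = v then 0 else gl.ord ⟨w, h⟩ + 1
  inj := by
    intro a b hab
    by_cases ha : a = v <;> by_cases hb : b = v <;>
      simp only [ha, hb, dif_pos, dif_neg, not_false_iff] at hab
    · rw [ha, hb]
    · omega
    · omega
    · have := gl.inj (by omega : gl.ord ⟨a, ha⟩ = gl.ord ⟨b, hb⟩)
      exact congrArg Subtype.val this
  dec := by
    intro a b hab hord
    by_cases ha : a = v <;> by_cases hb : b = v <;>
      simp only [ha, hb, dif_pos, dif_neg, not_false_iff] at hord ⊢
    · exact absurd (ha.trans hb.symm) hab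
    · subst ha
      constructor
      · intro h; exact absurd h (hv b)
      · intro h; exact absurd h (gl.hz _)
    · omega
    · have hne : (⟨a, ha⟩ : {w // w ≠ v}) ≠ ⟨b, hb⟩ := fun h => hab (congrArg Subtype.val h)
      have := gl.dec ⟨a, ha⟩ ⟨b, hb⟩ hne (by omega)
      rwa [SimpleGraph.comap_adj] at this
  zl := gl.zl
  ul := gl.ul
  hz := gl.hz
  hu := gl.hu

/-- Peel a universal vertex. -/
noncomputable def GLett.peelUniversal {V A : Type*} {G : SimpleGraph V} (v : V)
    (hv : ∀ w, w ≠ v → G.Adj v w)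
    (gl : GLett (G.comap (Subtype.val : {w // w ≠ v} → V)) A) : GLett G A where
  D := gl.D
  L := fun w => if h : w = v then gl.ul else gl.L ⟨w, h⟩
  ord := fun w => if h : w = v then 0 else gl.ord ⟨w, h⟩ + 1
  inj := by
    intro a b hab
    by_cases ha : a = v <;> by_cases hb : b = v <;>
      simp only [ha, hb, dif_pos, dif_neg, not_false_iff] at hab
    · rw [ha, hb]
    · omega
    · omega
    · have := gl.inj (by omega : gl.ord ⟨a, ha⟩ = gl.ord ⟨b, hb⟩)
      exact congrArg Subtype.val this
  dec := by
    intro a b hab hord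
    by_cases ha : a = v <;> by_cases hb : b = v <;>
      simp only [ha, hb, dif_pos, dif_neg, not_false_iff] at hord ⊢
    · exact absurd (ha.trans hb.symm) hab
    · subst ha
      constructor
      · intro _; exact gl.hu _
      · intro _; exact hv b hb
    · omega
    · have hne : (⟨a, ha⟩ : {w // w ≠ v}) ≠ ⟨b, hb⟩ := fun h => hab (congrArg Subtype.val h)
      have := gl.dec ⟨a, ha⟩ ⟨b, hb⟩ hne (by omega)
      rwa [SimpleGraph.comap_adj] at this
  zl := gl.zl
  ul := gl.ul
  hz := gl.hz
  hu := gl.hu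

/-- A `GLett` for graphs with at most one vertex. -/
def GLett.ofSubsingleton {V : Type*} [Subsingleton V] (G : SimpleGraph V) :
    GLett G (Fin 2) where
  D := {q | q.1 = 1}
  L := fun _ => 0
  ord := fun _ => 0
  inj := fun a b _ => Subsingleton.elim a b
  dec := fun u v huv _ => absurd (Subsingleton.elim u v) huv
  zl := 0
  ul := 1
  hz := by rintro x h; simp at h
  hu := fun _ => rfl

lemma fin2cases (i : Fin 2) : i = 0 ∨ i = 1 := by omega

lemma matching_cons {V : Type*} (G : SimpleGraph V) (p : V → Prop) (m : ℕ)
    (f : matchingGraph m ↪g G.comap (Subtype.val : {v // p v} → V))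
    (w₁ w₂ : V) (hw₁ : ¬ p w₁) (hw₂ : ¬ p w₂) (hadj : G.Adj w₁ w₂)
    (hcross : ∀ a b, p a → ¬ p b → ¬ G.Adj a b) :
    Nonempty (matchingGraph (m + 1) ↪g G) := by
  set W : Fin 2 → V := fun j => if j = 0 then w₁ else w₂ with hW
  have hWp : ∀ j, ¬ p (W j) := by
    intro j; rcases fin2cases j with h | h <;> simp [hW, h, hw₁, hw₂]
  have hWne : w₁ ≠ w₂ := hadj.ne
  set F : Fin (m + 1) × Fin 2 → V :=
    fun q => if h : (q.1 : ℕ) < m then (f (⟨q.1, h⟩, q.2) : V) else W q.2 with hF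
  have hFp : ∀ q (h : (q.1 : ℕ) < m), F q = (f (⟨q.1, h⟩, q.2) : V) := by
    intro q h; simp [hF, h]
  have hFw : ∀ q, ¬ (q.1 : ℕ) < m → F q = W q.2 := by
    intro q h; simp [hF, h]
  have hinj : Function.Injective F := by
    intro q r hqr
    by_cases hq : (q.1 : ℕ) < m <;> by_cases hr : (r.1 : ℕ) < m
    · rw [hFp q hq, hFp r hr] at hqr
      have h0 := f.injective (Subtype.ext hqr)
      have h1 : ((⟨q.1, hq⟩ : Fin m), q.2).1 = ((⟨r.1, hr⟩ : Fin m), r.2).1 :=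
        congrArg Prod.fst h0
      have h2 : ((⟨q.1, hq⟩ : Fin m), q.2).2 = ((⟨r.1, hr⟩ : Fin m), r.2).2 :=
        congrArg Prod.snd h0
      have h1' : (q.1 : ℕ) = (r.1 : ℕ) := congrArg (Fin.val (n := m)) h1
      exact Prod.ext (Fin.ext h1') h2
    · rw [hFp q hq, hFw r hr] at hqr
      exact absurd (hqr ▸ (f _).prop) (hWp r.2)
    · rw [hFw q hq, hFp r hr] at hqr
      exact absurd (hqr.symm ▸ (f _).prop) (hWp q.2)
    · rw [hFw q hq, hFw r hr] at hqr
      have h1 : q.1 = r.1 := by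
        have := q.1.isLt; have := r.1.isLt; exact Fin.ext (by omega)
      have h2 : q.2 = r.2 := by
        rcases fin2cases q.2 with h | h <;> rcases fin2cases r.2 with h' | h' <;>
          rw [h, h'] at hqr ⊢ <;> simp [hW] at hqr ⊢ <;>
          first | exact absurd hqr hWne | exact absurd hqr.symm hWne
      exact Prod.ext h1 h2
  refine ⟨⟨⟨F, hinj⟩, ?_⟩⟩
  intro q r
  show G.Adj (F q) (F r) ↔ (matchingGraph (m+1)).Adj q r
  rw [matching_adj]
  by_cases hq : (q.1 : ℕ) < m <;> by_cases hr : (r.1 : ℕ) < m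
  · rw [hFp q hq, hFp r hr]
    have hmr : G.Adj ↑(f (⟨q.1, hq⟩, q.2)) ↑(f (⟨r.1, hr⟩, r.2)) ↔
        (matchingGraph m).Adj (⟨q.1, hq⟩, q.2) (⟨r.1, hr⟩, r.2) := f.map_rel_iff
    rw [hmr, matching_adj]
    constructor
    · rintro ⟨h1, h2⟩
      exact ⟨Fin.ext (congrArg (Fin.val (n := m)) h1), h2⟩
    · rintro ⟨h1, h2⟩
      exact ⟨Fin.ext (congrArg (Fin.val (n := m + 1)) h1), h2⟩
  · rw [hFp q hq, hFw r hr]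
    constructor
    · intro h; exact absurd h (hcross _ _ (f _).prop (hWp r.2))
    · rintro ⟨h1, h2⟩
      have := q.1.isLt; have := r.1.isLt
      have : (q.1 : ℕ) = r.1 := congrArg (Fin.val (n := m + 1)) h1
      omega
  · rw [hFw q hq, hFp r hr]
    constructor
    · intro h; exact absurd h.symm (hcross _ _ (f _).prop (hWp q.2))
    · rintro ⟨h1, h2⟩
      have := q.1.isLt; have := r.1.isLt
      have : (q.1 : ℕ) = r.1 := congrArg (Fin.val (n := m + 1)) h1
      omega
  · rw [hFw q hq, hFw r hr]
    have h1 : q.1 = r.1 := by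
      have := q.1.isLt; have := r.1.isLt; exact Fin.ext (by omega)
    rcases fin2cases q.2 with h | h <;> rcases fin2cases r.2 with h' | h' <;>
      rw [h, h'] <;>
      simp [hW, h1, hadj, hadj.symm, (by decide : (0 : Fin 2) ≠ 1),
        (by decide : (1 : Fin 2) ≠ 0)]

lemma comatching_cons {V : Type*} (G : SimpleGraph V) (p : V → Prop) (m : ℕ)
    (f : (matchingGraph m)ᶜ ↪g G.comap (Subtype.val : {v // p v} → V))
    (w₁ w₂ : V) (hw₁ : ¬ p w₁) (hw₂ : ¬ p w₂) (hWne : w₁ ≠ w₂) (hnadj : ¬ G.Adj w₁ w₂)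
    (hcross : ∀ a b, p a → ¬ p b → G.Adj a b) :
    Nonempty ((matchingGraph (m + 1))ᶜ ↪g G) := by
  set W : Fin 2 → V := fun j => if j = 0 then w₁ else w₂ with hW
  have hWp : ∀ j, ¬ p (W j) := by
    intro j; rcases fin2cases j with h | h <;> simp [hW, h, hw₁, hw₂]
  set F : Fin (m + 1) × Fin 2 → V :=
    fun q => if h : (q.1 : ℕ) < m then (f (⟨q.1, h⟩, q.2) : V) else W q.2 with hF
  have hFp : ∀ q (h : (q.1 : ℕ) < m), F q = (f (⟨q.1, h⟩, q.2) : V) := by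
    intro q h; simp [hF, h]
  have hFw : ∀ q, ¬ (q.1 : ℕ) < m → F q = W q.2 := by
    intro q h; simp [hF, h]
  have hinj : Function.Injective F := by
    intro q r hqr
    by_cases hq : (q.1 : ℕ) < m <;> by_cases hr : (r.1 : ℕ) < m
    · rw [hFp q hq, hFp r hr] at hqr
      have h0 := f.injective (Subtype.ext hqr)
      have h1 : ((⟨q.1, hq⟩ : Fin m), q.2).1 = ((⟨r.1, hr⟩ : Fin m), r.2).1 :=
        congrArg Prod.fst h0
      have h2 : ((⟨q.1, hq⟩ : Fin m), q.2).2 = ((⟨r.1, hr⟩ : Fin m), r.2).2 :=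
        congrArg Prod.snd h0
      have h1' : (q.1 : ℕ) = (r.1 : ℕ) := congrArg (Fin.val (n := m)) h1
      exact Prod.ext (Fin.ext h1') h2
    · rw [hFp q hq, hFw r hr] at hqr
      exact absurd (hqr ▸ (f _).prop) (hWp r.2)
    · rw [hFw q hq, hFp r hr] at hqr
      exact absurd (hqr.symm ▸ (f _).prop) (hWp q.2)
    · rw [hFw q hq, hFw r hr] at hqr
      have h1 : q.1 = r.1 := by
        have := q.1.isLt; have := r.1.isLt; exact Fin.ext (by omega)
      have h2 : q.2 = r.2 := by
        rcases fin2cases q.2 with h | h <;> rcases fin2cases r.2 with h' | h' <;>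
          rw [h, h'] at hqr ⊢ <;> simp [hW] at hqr ⊢ <;>
          first | exact absurd hqr hWne | exact absurd hqr.symm hWne
      exact Prod.ext h1 h2
  refine ⟨⟨⟨F, hinj⟩, ?_⟩⟩
  intro q r
  show G.Adj (F q) (F r) ↔ ((matchingGraph (m+1))ᶜ).Adj q r
  rw [comatching_adj]
  by_cases hq : (q.1 : ℕ) < m <;> by_cases hr : (r.1 : ℕ) < m
  · rw [hFp q hq, hFp r hr]
    have hmr : G.Adj ↑(f (⟨q.1, hq⟩, q.2)) ↑(f (⟨r.1, hr⟩, r.2)) ↔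
        ((matchingGraph m)ᶜ).Adj (⟨q.1, hq⟩, q.2) (⟨r.1, hr⟩, r.2) := f.map_rel_iff
    rw [hmr, comatching_adj]
    constructor
    · intro h1 hc
      exact h1 (Fin.ext (congrArg (Fin.val (n := m + 1)) hc))
    · intro h1 hc
      exact h1 (Fin.ext (congrArg (Fin.val (n := m)) hc))
  · rw [hFp q hq, hFw r hr]
    constructor
    · intro _ hc
      have : (q.1 : ℕ) = r.1 := congrArg (Fin.val (n := m + 1)) hc
      have := r.1.isLt; omega
    · intro _
      exact hcross _ _ (f _).prop (hWp r.2)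
  · rw [hFw q hq, hFp r hr]
    constructor
    · intro _ hc
      have : (q.1 : ℕ) = r.1 := congrArg (Fin.val (n := m + 1)) hc
      have := r.1.isLt; omega
    · intro _
      exact (hcross _ _ (f _).prop (hWp q.2)).symm
  · rw [hFw q hq, hFw r hr]
    have h1 : q.1 = r.1 := by
      have := q.1.isLt; have := r.1.isLt; exact Fin.ext (by omega)
    constructor
    · intro hadj'
      rcases fin2cases q.2 with h | h <;> rcases fin2cases r.2 with h' | h' <;>
        rw [h, h'] at hadj' <;> simp [hW] at hadj' <;>
        first
          | exact absurd hadj' (G.irrefl)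
          | exact absurd hadj' hnadj
          | exact absurd hadj'.symm hnadj
    · intro hc
      exact absurd h1 hc

lemma matching_one {V : Type*} (G : SimpleGraph V) (w₁ w₂ : V) (hadj : G.Adj w₁ w₂) :
    Nonempty (matchingGraph 1 ↪g G) := by
  have h := matching_cons (V := V) G (fun _ => False) 0 ?_ w₁ w₂ (fun h => h) (fun h => h)
    hadj (fun a b ha _ => absurd ha (fun h => h))
  · exact h
  · refine ⟨⟨fun q => absurd q.1.isLt (by omega), ?_⟩, ?_⟩
    · intro q; exact absurd q.1.isLt (by omega)
    · intro q; exact absurd q.1.isLt (by omega)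

lemma comatching_one {V : Type*} (G : SimpleGraph V) (w₁ w₂ : V) (hne : w₁ ≠ w₂)
    (hnadj : ¬ G.Adj w₁ w₂) :
    Nonempty ((matchingGraph 1)ᶜ ↪g G) := by
  have h := comatching_cons (V := V) G (fun _ => False) 0 ?_ w₁ w₂ (fun h => h) (fun h => h)
    hne hnadj (fun a b ha _ => absurd ha (fun h => h))
  · exact h
  · refine ⟨⟨fun q => absurd q.1.isLt (by omega), ?_⟩, ?_⟩
    · intro q; exact absurd q.1.isLt (by omega)
    · intro q; exact absurd q.1.isLt (by omega)

attribute [local instance] Classical.propDecidable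

open SimpleGraph

/-- From four vertices forming an induced path, get a contradiction with P₄-freeness. -/
lemma p4_of {V : Type*} {G : SimpleGraph V}
    (hP4 : IsEmpty (SimpleGraph.pathGraph 4 ↪g G)) (a b c d : V)
    (hab : G.Adj a b) (hbc : G.Adj b c) (hcd : G.Adj c d)
    (hac : ¬ G.Adj a c) (had : ¬ G.Adj a d) (hbd : ¬ G.Adj b d) : False := by
  have hane : a ≠ c := fun h => had (h ▸ hcd)
  have hadne : a ≠ d := fun h => hac (h ▸ hcd.symm)
  have hbdne : b ≠ d := fun h => had (h ▸ hab)
  set F : Fin 4 → V := ![a, b, c, d] with hF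
  have hinj : Function.Injective F := by
    intro i j hij
    fin_cases i <;> fin_cases j <;> simp_all [hF] <;>
      first
        | rfl
        | exact absurd hij hab.ne
        | exact absurd hij.symm hab.ne
        | exact absurd hij hbc.ne
        | exact absurd hij.symm hbc.ne
        | exact absurd hij hcd.ne
        | exact absurd hij.symm hcd.ne
        | exact absurd hij hane
        | exact absurd hij.symm hane
        | exact absurd hij hadne
        | exact absurd hij.symm hadne
        | exact absurd hij hbdne
        | exact absurd hij.symm hbdne
  have hca : ¬ G.Adj c a := fun h => hac h.symm
  have hda : ¬ G.Adj d a := fun h => had h.symm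
  have hdb : ¬ G.Adj d b := fun h => hbd h.symm
  refine hP4.false ⟨⟨F, hinj⟩, ?_⟩
  intro i j
  show G.Adj (F i) (F j) ↔ (SimpleGraph.pathGraph 4).Adj i j
  fin_cases i <;> fin_cases j <;>
    simp [hF, SimpleGraph.pathGraph_adj, hab, hbc, hcd, hac, had, hbd,
      hab.symm, hbc.symm, hcd.symm, hca, hda, hdb, G.irrefl] <;>
    decide

/-- An embedding into the complement yields an embedding of the complement. -/
def complEmb {V W : Type*} {H : SimpleGraph V} {G : SimpleGraph W}
    (f : H ↪g Gᶜ) : Hᶜ ↪g G where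
  toFun := f
  inj' := f.injective
  map_rel_iff' := by
    intro a b
    constructor
    · intro hadj
      exact ⟨fun h => hadj.ne (congrArg f h), fun hH => (f.map_rel_iff.mpr hH).2 hadj⟩
    · rintro ⟨hne, hnadj⟩
      by_contra hn
      exact hnadj (f.map_rel_iff.mp ⟨fun h => hne (f.injective h), hn⟩)

/-- P₄ embeds into its own complement. -/
lemma p4_self_compl : Nonempty (SimpleGraph.pathGraph 4 ↪g (SimpleGraph.pathGraph 4)ᶜ) := by
  set F : Fin 4 → Fin 4 := ![1, 3, 0, 2] with hF
  have hinj : Function.Injective F := by decide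
  refine ⟨⟨F, hinj⟩, ?_⟩
  intro i j
  show ((SimpleGraph.pathGraph 4)ᶜ).Adj (F i) (F j) ↔ (SimpleGraph.pathGraph 4).Adj i j
  fin_cases i <;> fin_cases j <;>
    simp [hF, SimpleGraph.compl_adj, SimpleGraph.pathGraph_adj] <;> decide

lemma p4free_compl {V : Type*} {G : SimpleGraph V}
    (h : IsEmpty (SimpleGraph.pathGraph 4 ↪g G)) :
    IsEmpty (SimpleGraph.pathGraph 4 ↪g Gᶜ) := by
  constructor
  intro f
  obtain ⟨e⟩ := p4_self_compl
  exact h.false ((complEmb f).comp e)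

lemma step {V : Type*} {G : SimpleGraph V}
    (hP4 : IsEmpty (SimpleGraph.pathGraph 4 ↪g G)) (v : V) (X Y : Set V)
    (hXne : X.Nonempty) (hYne : Y.Nonempty)
    (hvX : v ∉ X) (hvY : v ∉ Y)
    (hcov : ∀ w, w ≠ v → w ∈ X ∨ w ∈ Y)
    (hXY : ∀ a ∈ X, ∀ b ∈ Y, ¬ G.Adj a b) :
    ∃ S : Set V, S.Nonempty ∧ Sᶜ.Nonempty ∧
      ((∀ a ∈ S, ∀ b ∈ Sᶜ, ¬ G.Adj a b) ∨ (∀ a ∈ S, ∀ b ∈ Sᶜ, G.Adj a b)) := by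
  by_cases hXadj : ∀ a ∈ X, ¬ G.Adj v a
  · refine ⟨X, hXne, ⟨v, hvX⟩, Or.inl ?_⟩
    intro a ha b hb
    by_cases hbv : b = v
    · subst hbv; exact fun h => hXadj a ha h.symm
    · exact hXY a ha b ((hcov b hbv).resolve_left hb)
  by_cases hYadj : ∀ a ∈ Y, ¬ G.Adj v a
  · refine ⟨Y, hYne, ⟨v, hvY⟩, Or.inl ?_⟩
    intro a ha b hb
    by_cases hbv : b = v
    · subst hbv; exact fun h => hYadj a ha h.symm
    · intro h
      exact hXY b ((hcov b hbv).resolve_right hb) a ha h.symm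
  push_neg at hXadj hYadj
  obtain ⟨x₀, hx₀X, hx₀⟩ := hXadj
  obtain ⟨y₀, hy₀Y, hy₀⟩ := hYadj
  have hkey : ∀ a b, ((a ∈ X ∧ b ∈ X) ∨ (a ∈ Y ∧ b ∈ Y)) →
      G.Adj a b → G.Adj v a → ¬ G.Adj v b → False := by
    intro a b hmem hab hva hnvb
    rcases hmem with ⟨haX, hbX⟩ | ⟨haY, hbY⟩
    · exact p4_of hP4 b a v y₀ hab.symm hva.symm hy₀
        (fun h => hnvb h.symm) (hXY b hbX y₀ hy₀Y) (hXY a haX y₀ hy₀Y)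
    · exact p4_of hP4 b a v x₀ hab.symm hva.symm hx₀
        (fun h => hnvb h.symm)
        (fun h => hXY x₀ hx₀X b hbY h.symm)
        (fun h => hXY x₀ hx₀X a haY h.symm)
  by_cases hB : ∃ w, w ≠ v ∧ ¬ G.Adj v w
  · obtain ⟨w₀, hw₀v, hw₀⟩ := hB
    refine ⟨{w | w ≠ v ∧ ¬ G.Adj v w}, ⟨w₀, hw₀v, hw₀⟩, ⟨v, ?_⟩, Or.inl ?_⟩
    · simp
    · rintro a ⟨hav, hnva⟩ b hb
      by_cases hbv : b = v
      · subst hbv; exact fun h => hnva h.symm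
      · have hvb : G.Adj v b := by
          by_contra hn
          exact hb ⟨hbv, hn⟩
        intro hab
        rcases hcov a hav with haX | haY <;> rcases hcov b hbv with hbX | hbY
        · exact hkey b a (Or.inl ⟨hbX, haX⟩) hab.symm hvb hnva
        · exact hXY a haX b hbY hab
        · exact hXY b hbX a haY hab.symm
        · exact hkey b a (Or.inr ⟨hbY, haY⟩) hab.symm hvb hnva
  · push_neg at hB
    obtain ⟨x, hxX⟩ := hXne
    refine ⟨{v}, ⟨v, rfl⟩, ⟨x, fun h => hvX ((Set.mem_singleton_iff.mp h) ▸ hxX)⟩, Or.inr ?_⟩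
    intro a ha b hb
    have hav : a = v := Set.mem_singleton_iff.mp ha
    have hbv : b ≠ v := fun h => hb (h ▸ rfl)
    exact hav ▸ hB b hbv

lemma seinsche : ∀ (n : ℕ) (V : Type) [inst : Fintype V] (G : SimpleGraph V),
    Fintype.card V ≤ n → 2 ≤ Fintype.card V →
    IsEmpty (SimpleGraph.pathGraph 4 ↪g G) →
    ∃ S : Set V, S.Nonempty ∧ Sᶜ.Nonempty ∧
      ((∀ a ∈ S, ∀ b ∈ Sᶜ, ¬ G.Adj a b) ∨ (∀ a ∈ S, ∀ b ∈ Sᶜ, G.Adj a b)) := by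
  intro n
  induction n with
  | zero => intro V _ G hc h2 _; omega
  | succ n ih =>
    intro V _ G hc h2 hP4
    by_cases hc2 : Fintype.card V = 2
    · have h2' : Nat.card V = 2 := by rw [Nat.card_eq_fintype_card]; exact hc2
      obtain ⟨x, y, hxy, huniv⟩ := Nat.card_eq_two_iff.mp h2'
      have hall : ∀ b : V, b ≠ x → b = y := by
        intro b hbx
        have hb : b ∈ ({x, y} : Set V) := huniv ▸ Set.mem_univ b
        rcases hb with h | h
        · exact absurd h hbx
        · exact h
      have hmemx : ∀ a : V, a ∈ ({x} : Set V) → a = x := fun a ha => ha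
      have hmemc : ∀ b : V, b ∈ ({x} : Set V)ᶜ → b = y := by
        intro b hb
        exact hall b (fun h => hb (h ▸ rfl))
      refine ⟨{x}, ⟨x, rfl⟩, ⟨y, fun h => hxy (Set.mem_singleton_iff.mp h).symm⟩, ?_⟩
      by_cases hadj : G.Adj x y
      · right
        intro a ha b hb
        rw [hmemx a ha, hmemc b hb]
        exact hadj
      · left
        intro a ha b hb
        rw [hmemx a ha, hmemc b hb]
        exact hadj
    · have hne : Nonempty V := Fintype.card_pos_iff.mp (by omega)
      obtain ⟨v⟩ := hne
      set G' := G.comap (Subtype.val : {w // w ≠ v} → V) with hG'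
      have hemb : G' ↪g G := SimpleGraph.Embedding.comap (Function.Embedding.subtype _) G
      have hcardeq : Fintype.card {w // w ≠ v} = Fintype.card V - 1 := by
        have := Fintype.card_subtype_compl (fun w => w = v)
        simpa [Fintype.card_subtype_eq] using this
      have hP4' : IsEmpty (SimpleGraph.pathGraph 4 ↪g G') :=
        ⟨fun f => hP4.false (hemb.comp f)⟩
      obtain ⟨S', hS'ne, hS'cne, hor⟩ := ih {w // w ≠ v} G' (by omega) (by omega) hP4'
      set X : Set V := Subtype.val '' S' with hX
      set Y : Set V := Subtype.val '' S'ᶜ with hY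
      have hXne : X.Nonempty := hS'ne.image _
      have hYne : Y.Nonempty := hS'cne.image _
      have hvX : v ∉ X := by rintro ⟨⟨w, hw⟩, _, h⟩; exact hw h
      have hvY : v ∉ Y := by rintro ⟨⟨w, hw⟩, _, h⟩; exact hw h
      have hcov : ∀ w, w ≠ v → w ∈ X ∨ w ∈ Y := by
        intro w hw
        by_cases h : (⟨w, hw⟩ : {w // w ≠ v}) ∈ S'
        · exact Or.inl ⟨⟨w, hw⟩, h, rfl⟩
        · exact Or.inr ⟨⟨w, hw⟩, h, rfl⟩
      rcases hor with hno | hall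
      · have hXY : ∀ a ∈ X, ∀ b ∈ Y, ¬ G.Adj a b := by
          rintro a ⟨a', ha', rfl⟩ b ⟨b', hb', rfl⟩ hadj
          exact hno a' ha' b' hb' hadj
        exact step hP4 v X Y hXne hYne hvX hvY hcov hXY
      · have hXY : ∀ a ∈ X, ∀ b ∈ Y, ¬ Gᶜ.Adj a b := by
          rintro a ⟨a', ha', rfl⟩ b ⟨b', hb', rfl⟩ hadj
          exact hadj.2 (hall a' ha' b' hb')
        obtain ⟨S, hSne, hScne, hor'⟩ :=
          step (G := Gᶜ) (p4free_compl hP4) v X Y hXne hYne hvX hvY hcov hXY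
        refine ⟨S, hSne, hScne, ?_⟩
        rcases hor' with h | h
        · right
          intro a ha b hb
          have hne : a ≠ b := fun heq => hb (heq ▸ ha)
          by_contra hn
          exact h a ha b hb ⟨hne, hn⟩
        · left
          intro a ha b hb
          exact (h a ha b hb).2

lemma matching_bound {m k : ℕ} (h : HasLettering (matchingGraph m) k) : m ≤ k * k := by
  obtain ⟨D, L, ord, hinj, hdec⟩ := h
  set a : Fin m → Fin m × Fin 2 :=
    fun i => if ord (i, 0) < ord (i, 1) then (i, 0) else (i, 1) with ha
  set b : Fin m → Fin m × Fin 2 :=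
    fun i => if ord (i, 0) < ord (i, 1) then (i, 1) else (i, 0) with hb
  have hne01 : ∀ i : Fin m, ((i, 0) : Fin m × Fin 2) ≠ (i, 1) := by
    intro i h
    have := congrArg Prod.snd h
    simp at this
  have hafst : ∀ i, (a i).1 = i := by
    intro i; rw [ha]; dsimp only; split <;> rfl
  have hbfst : ∀ i, (b i).1 = i := by
    intro i; rw [hb]; dsimp only; split <;> rfl
  have hord : ∀ i, ord (a i) < ord (b i) := by
    intro i
    have hne : ord (i, 0) ≠ ord (i, 1) := fun h => hne01 i (hinj h)
    rw [ha, hb]; dsimp only; split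
    · assumption
    · omega
  have habne : ∀ i, a i ≠ b i := fun i h => (hord i).ne (congrArg ord h)
  have hadj : ∀ i, (matchingGraph i |>.Adj) = (matchingGraph i |>.Adj) := fun _ => rfl
  have hadj' : ∀ i, (matchingGraph m).Adj (a i) (b i) := by
    intro i
    rw [matching_adj, hafst, hbfst]
    refine ⟨rfl, ?_⟩
    rw [ha, hb]; dsimp only; split <;> simp
  set F : Fin m → Fin k × Fin k := fun i => (L (a i), L (b i)) with hFdef
  have key : ∀ i j, i ≠ j → F i = F j → ord (a i) < ord (a j) → False := by
    intro i j hij hF hlt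
    have hD : (L (a i), L (b i)) ∈ D := (hdec (a i) (b i) (habne i) (hord i)).mp (hadj' i)
    have haij : a i ≠ b j := by
      intro h
      have : (a i).1 = (b j).1 := congrArg Prod.fst h
      rw [hafst, hbfst] at this
      exact hij this
    rcases Nat.lt_trichotomy (ord (a i)) (ord (b j)) with h | h | h
    · have hsnd : L (b j) = L (b i) := (congrArg Prod.snd hF).symm
      have hfst : L (a j) = L (a i) := (congrArg Prod.fst hF).symm
      have hmem : (L (a i), L (b j)) ∈ D := by rw [hsnd]; exact hD
      have hadjij := (hdec (a i) (b j) haij h).mpr hmem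
      have : (a i).1 = (b j).1 := hadjij.1
      rw [hafst, hbfst] at this
      exact hij this
    · exact haij (hinj h)
    · have := hord j; omega
  have hFinj : Function.Injective F := by
    intro i j hF
    by_contra hij
    have hane : a i ≠ a j := by
      intro h
      have := congrArg Prod.fst h
      rw [hafst, hafst] at this
      exact hij this
    rcases Nat.lt_trichotomy (ord (a i)) (ord (a j)) with h | h | h
    · exact key i j hij hF h
    · exact hane (hinj h)
    · exact key j i (Ne.symm hij) hF.symm h
  calc m = Fintype.card (Fin m) := (Fintype.card_fin m).symm
    _ ≤ Fintype.card (Fin k × Fin k) := Fintype.card_le_of_injective F hFinj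
    _ = k * k := by simp

lemma comatching_bound {m k : ℕ} (h : HasLettering ((matchingGraph m)ᶜ) k) : m ≤ k * k := by
  obtain ⟨D, L, ord, hinj, hdec⟩ := h
  set a : Fin m → Fin m × Fin 2 :=
    fun i => if ord (i, 0) < ord (i, 1) then (i, 0) else (i, 1) with ha
  set b : Fin m → Fin m × Fin 2 :=
    fun i => if ord (i, 0) < ord (i, 1) then (i, 1) else (i, 0) with hb
  have hne01 : ∀ i : Fin m, ((i, 0) : Fin m × Fin 2) ≠ (i, 1) := by
    intro i h
    have := congrArg Prod.snd h
    simp at this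
  have hafst : ∀ i, (a i).1 = i := by
    intro i; rw [ha]; dsimp only; split <;> rfl
  have hbfst : ∀ i, (b i).1 = i := by
    intro i; rw [hb]; dsimp only; split <;> rfl
  have hord : ∀ i, ord (a i) < ord (b i) := by
    intro i
    have hne : ord (i, 0) ≠ ord (i, 1) := fun h => hne01 i (hinj h)
    rw [ha, hb]; dsimp only; split
    · assumption
    · omega
  have habne : ∀ i, a i ≠ b i := fun i h => (hord i).ne (congrArg ord h)
  have hnadj : ∀ i, ¬ ((matchingGraph m)ᶜ).Adj (a i) (b i) := by
    intro i h
    rw [comatching_adj, hafst, hbfst] at h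
    exact h rfl
  set F : Fin m → Fin k × Fin k := fun i => (L (a i), L (b i)) with hFdef
  have key : ∀ i j, i ≠ j → F i = F j → ord (a i) < ord (a j) → False := by
    intro i j hij hF hlt
    have hD : (L (a i), L (b i)) ∉ D := fun hm =>
      hnadj i ((hdec (a i) (b i) (habne i) (hord i)).mpr hm)
    have haij : a i ≠ b j := by
      intro h
      have : (a i).1 = (b j).1 := congrArg Prod.fst h
      rw [hafst, hbfst] at this
      exact hij this
    rcases Nat.lt_trichotomy (ord (a i)) (ord (b j)) with h | h | h
    · have hadjij : ((matchingGraph m)ᶜ).Adj (a i) (b j) := by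
        rw [comatching_adj, hafst, hbfst]
        exact hij
      have hmem := (hdec (a i) (b j) haij h).mp hadjij
      have hsnd : L (b j) = L (b i) := (congrArg Prod.snd hF).symm
      rw [hsnd] at hmem
      exact hD hmem
    · exact haij (hinj h)
    · have := hord j; omega
  have hFinj : Function.Injective F := by
    intro i j hF
    by_contra hij
    have hane : a i ≠ a j := by
      intro h
      have := congrArg Prod.fst h
      rw [hafst, hafst] at this
      exact hij this
    rcases Nat.lt_trichotomy (ord (a i)) (ord (a j)) with h | h | h
    · exact key i j hij hF h
    · exact hane (hinj h)
    · exact key j i (Ne.symm hij) hF.symm h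
  calc m = Fintype.card (Fin m) := (Fintype.card_fin m).symm
    _ ≤ Fintype.card (Fin k × Fin k) := Fintype.card_le_of_injective F hFinj
    _ = k * k := by simp

lemma hasLettering_comp {V W : Type*} {G : SimpleGraph W} {H : SimpleGraph V} {k : ℕ}
    (h : HasLettering G k) (f : H ↪g G) : HasLettering H k := by
  obtain ⟨D, L, ord, hinj, hdec⟩ := h
  refine ⟨D, L ∘ f, ord ∘ f, hinj.comp f.injective, ?_⟩
  intro u v huv hord
  have h2 := hdec (f u) (f v) (fun h => huv (f.injective h)) hord
  show H.Adj u v ↔ (L (f u), L (f v)) ∈ D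
  rw [← h2, f.map_rel_iff]

def bnd : ℕ → ℕ
  | 0 => 2
  | s + 1 => 2 * bnd s + 2

lemma two_le_bnd (s : ℕ) : 2 ≤ bnd s := by
  cases s with
  | zero => exact le_refl 2
  | succ s =>
    have := bnd.eq_def
    show 2 ≤ 2 * bnd s + 2
    omega

lemma core : ∀ (s n : ℕ) (V : Type) [inst : Fintype V] (G : SimpleGraph V),
    Fintype.card V ≤ n →
    ∀ m₁ m₂ : ℕ, 0 < m₁ → 0 < m₂ → m₁ + m₂ = s →
    IsEmpty (SimpleGraph.pathGraph 4 ↪g G) →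
    IsEmpty (matchingGraph m₁ ↪g G) →
    IsEmpty ((matchingGraph m₂)ᶜ ↪g G) →
    Nonempty (GLett G (Fin (bnd s))) := by
  intro s
  induction s using Nat.strong_induction_on with
  | _ s ihs =>
  intro n
  induction n using Nat.strong_induction_on with
  | _ n ihn =>
  intro V instV G hcard m₁ m₂ hm₁ hm₂ hsum hP4 hM hCM
  by_cases hcard1 : Fintype.card V ≤ 1
  · have hss : Subsingleton V := Fintype.card_le_one_iff_subsingleton.mp hcard1
    exact ⟨(GLett.ofSubsingleton G).mono (Fin.castLEEmb (two_le_bnd s))⟩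
  push_neg at hcard1
  by_cases hiso : ∃ v : V, ∀ w, ¬ G.Adj v w
  · obtain ⟨v, hv⟩ := hiso
    set G' := G.comap (Subtype.val : {w // w ≠ v} → V) with hG'
    have hemb : G' ↪g G := SimpleGraph.Embedding.comap (Function.Embedding.subtype _) G
    have hlt : Fintype.card {w // w ≠ v} < n :=
      lt_of_lt_of_le (Fintype.card_subtype_lt (x := v) (by simp)) hcard
    obtain ⟨gl⟩ := ihn _ hlt {w // w ≠ v} G' le_rfl m₁ m₂ hm₁ hm₂ hsum
      ⟨fun f => hP4.false (hemb.comp f)⟩ ⟨fun f => hM.false (hemb.comp f)⟩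
      ⟨fun f => hCM.false (hemb.comp f)⟩
    exact ⟨GLett.peelIsolated v hv gl⟩
  by_cases huni : ∃ v : V, ∀ w, w ≠ v → G.Adj v w
  · obtain ⟨v, hv⟩ := huni
    set G' := G.comap (Subtype.val : {w // w ≠ v} → V) with hG'
    have hemb : G' ↪g G := SimpleGraph.Embedding.comap (Function.Embedding.subtype _) G
    have hlt : Fintype.card {w // w ≠ v} < n :=
      lt_of_lt_of_le (Fintype.card_subtype_lt (x := v) (by simp)) hcard
    obtain ⟨gl⟩ := ihn _ hlt {w // w ≠ v} G' le_rfl m₁ m₂ hm₁ hm₂ hsum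
      ⟨fun f => hP4.false (hemb.comp f)⟩ ⟨fun f => hM.false (hemb.comp f)⟩
      ⟨fun f => hCM.false (hemb.comp f)⟩
    exact ⟨GLett.peelUniversal v hv gl⟩
  push_neg at hiso huni
  obtain ⟨S, hSne, hScne, hor⟩ := seinsche n V G hcard (by omega) hP4
  obtain ⟨s', rfl⟩ : ∃ s', s = s' + 1 := ⟨s - 1, by omega⟩
  have hbndeq : bnd s' + bnd s' + 2 = bnd (s' + 1) := by
    show bnd s' + bnd s' + 2 = 2 * bnd s' + 2
    omega
  set p : V → Prop := fun v => v ∈ S with hp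
  set G₁ := G.comap (Subtype.val : {v // p v} → V) with hG₁
  set G₂ := G.comap (Subtype.val : {v // ¬ p v} → V) with hG₂
  have hemb₁ : G₁ ↪g G := SimpleGraph.Embedding.comap (Function.Embedding.subtype _) G
  have hemb₂ : G₂ ↪g G := SimpleGraph.Embedding.comap (Function.Embedding.subtype _) G
  have hP4₁ : IsEmpty (SimpleGraph.pathGraph 4 ↪g G₁) := ⟨fun f => hP4.false (hemb₁.comp f)⟩
  have hP4₂ : IsEmpty (SimpleGraph.pathGraph 4 ↪g G₂) := ⟨fun f => hP4.false (hemb₂.comp f)⟩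
  rcases hor with hno | hall
  · -- no cross edges
    have hnoS : ∀ a b : V, p a → ¬ p b → ¬ G.Adj a b := by
      intro a b ha hb
      exact hno a ha b hb
    obtain ⟨u₁, hu₁⟩ := hSne
    obtain ⟨w₁, he₁⟩ := hiso u₁
    have hw₁ : p w₁ := by
      by_contra hw
      exact hnoS u₁ w₁ hu₁ hw he₁
    obtain ⟨u₂, hu₂⟩ := hScne
    obtain ⟨w₂, he₂⟩ := hiso u₂
    have hu₂' : ¬ p u₂ := hu₂
    have hw₂ : ¬ p w₂ := by
      intro hw
      exact hnoS w₂ u₂ hw hu₂' he₂.symm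
    have hm₁2 : 2 ≤ m₁ := by
      by_contra hlt
      have hm1 : m₁ = 1 := by omega
      subst hm1
      exact (hM.false (Classical.choice (matching_one G u₁ w₁ he₁))).elim
    have hM₁ : IsEmpty (matchingGraph (m₁ - 1) ↪g G₁) := by
      constructor
      intro f
      obtain ⟨F⟩ := matching_cons G p (m₁ - 1) f u₂ w₂ hu₂' hw₂ he₂ hnoS
      have hmeq : m₁ - 1 + 1 = m₁ := by omega
      rw [hmeq] at F
      exact hM.false F
    have hM₂ : IsEmpty (matchingGraph (m₁ - 1) ↪g G₂) := by
      constructor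
      intro f
      obtain ⟨F⟩ := matching_cons G (fun v => ¬ p v) (m₁ - 1) f u₁ w₁
        (fun h => h hu₁) (fun h => h hw₁) he₁
        (fun a b ha hb => fun hadj => hnoS b a (not_not.mp hb) ha hadj.symm)
      have hmeq : m₁ - 1 + 1 = m₁ := by omega
      rw [hmeq] at F
      exact hM.false F
    have hCM₁ : IsEmpty ((matchingGraph m₂)ᶜ ↪g G₁) := ⟨fun f => hCM.false (hemb₁.comp f)⟩
    have hCM₂ : IsEmpty ((matchingGraph m₂)ᶜ ↪g G₂) := ⟨fun f => hCM.false (hemb₂.comp f)⟩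
    obtain ⟨gl₁⟩ := ihs s' (by omega) (Fintype.card {v // p v}) {v // p v} G₁ le_rfl
      (m₁ - 1) m₂ (by omega) hm₂ (by omega) hP4₁ hM₁ hCM₁
    obtain ⟨gl₂⟩ := ihs s' (by omega) (Fintype.card {v // ¬ p v}) {v // ¬ p v} G₂ le_rfl
      (m₁ - 1) m₂ (by omega) hm₂ (by omega) hP4₂ hM₂ hCM₂
    have l := Lett.split G p False
      (fun u v hu hv => iff_false_intro (hnoS u v hu hv)) gl₁.toLett gl₂.toLett
    refine ⟨l.addZU.mono ?_⟩
    exact ((Equiv.sumCongr finSumFinEquiv (Equiv.refl (Fin 2))).trans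
      (finSumFinEquiv.trans (finCongr hbndeq))).toEmbedding
  · -- all cross edges
    have hallS : ∀ a b : V, p a → ¬ p b → G.Adj a b := by
      intro a b ha hb
      exact hall a ha b hb
    obtain ⟨u₁, hu₁⟩ := hSne
    obtain ⟨w₁, hw₁ne, he₁⟩ := huni u₁
    have hw₁ : p w₁ := by
      by_contra hw
      exact he₁ (hallS u₁ w₁ hu₁ hw)
    obtain ⟨u₂, hu₂⟩ := hScne
    have hu₂' : ¬ p u₂ := hu₂
    obtain ⟨w₂, hw₂ne, he₂⟩ := huni u₂
    have hw₂ : ¬ p w₂ := by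
      intro hw
      exact he₂ ((hallS w₂ u₂ hw hu₂').symm)
    have hm₂2 : 2 ≤ m₂ := by
      by_contra hlt
      have hm1 : m₂ = 1 := by omega
      subst hm1
      exact (hCM.false (Classical.choice
        (comatching_one G u₁ w₁ (Ne.symm hw₁ne) he₁))).elim
    have hCM₁ : IsEmpty ((matchingGraph (m₂ - 1))ᶜ ↪g G₁) := by
      constructor
      intro f
      obtain ⟨F⟩ := comatching_cons G p (m₂ - 1) f u₂ w₂ hu₂' hw₂
        (Ne.symm hw₂ne) he₂ hallS
      have hmeq : m₂ - 1 + 1 = m₂ := by omega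
      rw [hmeq] at F
      exact hCM.false F
    have hCM₂ : IsEmpty ((matchingGraph (m₂ - 1))ᶜ ↪g G₂) := by
      constructor
      intro f
      obtain ⟨F⟩ := comatching_cons G (fun v => ¬ p v) (m₂ - 1) f u₁ w₁
        (fun h => h hu₁) (fun h => h hw₁) (Ne.symm hw₁ne) he₁
        (fun a b ha hb => (hallS b a (not_not.mp hb) ha).symm)
      have hmeq : m₂ - 1 + 1 = m₂ := by omega
      rw [hmeq] at F
      exact hCM.false F
    have hM₁ : IsEmpty (matchingGraph m₁ ↪g G₁) := ⟨fun f => hM.false (hemb₁.comp f)⟩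
    have hM₂ : IsEmpty (matchingGraph m₁ ↪g G₂) := ⟨fun f => hM.false (hemb₂.comp f)⟩
    obtain ⟨gl₁⟩ := ihs s' (by omega) (Fintype.card {v // p v}) {v // p v} G₁ le_rfl
      m₁ (m₂ - 1) hm₁ (by omega) (by omega) hP4₁ hM₁ hCM₁
    obtain ⟨gl₂⟩ := ihs s' (by omega) (Fintype.card {v // ¬ p v}) {v // ¬ p v} G₂ le_rfl
      m₁ (m₂ - 1) hm₁ (by omega) (by omega) hP4₂ hM₂ hCM₂
    have l := Lett.split G p True
      (fun u v hu hv => iff_true_intro (hallS u v hu hv)) gl₁.toLett gl₂.toLett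
    refine ⟨l.addZU.mono ?_⟩
    exact ((Equiv.sumCongr finSumFinEquiv (Equiv.refl (Fin 2))).trans
      (finSumFinEquiv.trans (finCongr hbndeq))).toEmbedding

end BddLett

/-- A hereditary class of cographs has bounded lettericity if and only if it
contains neither all matchings nor all co-matchings. -/
theorem cograph_class_bounded_lettericity
    (C : (n : ℕ) → SimpleGraph (Fin n) → Prop)
    (hered : ∀ (m n : ℕ) (G : SimpleGraph (Fin m)) (H : SimpleGraph (Fin n)),
      C m G → Nonempty (H ↪g G) → C n H)
    (hcograph : ∀ (n : ℕ) (G : SimpleGraph (Fin n)), C n G →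
      IsEmpty (SimpleGraph.pathGraph 4 ↪g G)) :
    (∃ k : ℕ, ∀ (n : ℕ) (G : SimpleGraph (Fin n)), C n G → HasLettering G k) ↔
      (¬ ∀ m : ℕ, 0 < m →
        ∃ G : SimpleGraph (Fin (2 * m)), C (2 * m) G ∧ Nonempty (G ≃g matchingGraph m)) ∧
      (¬ ∀ m : ℕ, 0 < m →
        ∃ G : SimpleGraph (Fin (2 * m)), C (2 * m) G ∧ Nonempty (G ≃g (matchingGraph m)ᶜ)) := by
  classical
  constructor
  · rintro ⟨k, hk⟩
    constructor
    · intro hall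
      obtain ⟨G, hG, ⟨iso⟩⟩ := hall (k * k + 1) (by omega)
      have h1 : HasLettering G k := hk _ G hG
      have h2 : HasLettering (matchingGraph (k * k + 1)) k :=
        BddLett.hasLettering_comp h1 iso.symm.toEmbedding
      have := BddLett.matching_bound h2
      omega
    · intro hall
      obtain ⟨G, hG, ⟨iso⟩⟩ := hall (k * k + 1) (by omega)
      have h1 : HasLettering G k := hk _ G hG
      have h2 : HasLettering ((matchingGraph (k * k + 1))ᶜ) k :=
        BddLett.hasLettering_comp h1 iso.symm.toEmbedding
      have := BddLett.comatching_bound h2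
      omega
  · rintro ⟨h₁, h₂⟩
    push_neg at h₁ h₂
    obtain ⟨m₁, hm₁, hnom⟩ := h₁
    obtain ⟨m₂, hm₂, hnoc⟩ := h₂
    refine ⟨BddLett.bnd (m₁ + m₂), ?_⟩
    intro n G hG
    have hP4 := hcograph n G hG
    have hM : IsEmpty (matchingGraph m₁ ↪g G) := by
      constructor
      intro f
      set e : Fin (2 * m₁) ≃ Fin m₁ × Fin 2 :=
        (finCongr (by ring : 2 * m₁ = m₁ * 2)).trans finProdFinEquiv.symm with he
      set G' : SimpleGraph (Fin (2 * m₁)) :=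
        SimpleGraph.comap (⇑e.toEmbedding) (matchingGraph m₁) with hG'
      have iso : G' ≃g matchingGraph m₁ := SimpleGraph.Iso.comap e (matchingGraph m₁)
      have hembG : G' ↪g G := f.comp iso.toEmbedding
      have hC' : C (2 * m₁) G' := hered n (2 * m₁) G G' hG ⟨hembG⟩
      exact (hnom G' hC').false iso
    have hCM : IsEmpty ((matchingGraph m₂)ᶜ ↪g G) := by
      constructor
      intro f
      set e : Fin (2 * m₂) ≃ Fin m₂ × Fin 2 :=
        (finCongr (by ring : 2 * m₂ = m₂ * 2)).trans finProdFinEquiv.symm with he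
      set G' : SimpleGraph (Fin (2 * m₂)) :=
        SimpleGraph.comap (⇑e.toEmbedding) ((matchingGraph m₂)ᶜ) with hG'
      have iso : G' ≃g (matchingGraph m₂)ᶜ := SimpleGraph.Iso.comap e ((matchingGraph m₂)ᶜ)
      have hembG : G' ↪g G := f.comp iso.toEmbedding
      have hC' : C (2 * m₂) G' := hered n (2 * m₂) G G' hG ⟨hembG⟩
      exact (hnoc G' hC').false iso
    obtain ⟨gl⟩ := BddLett.core (m₁ + m₂) (Fintype.card (Fin n)) (Fin n) G le_rfl
      m₁ m₂ hm₁ hm₂ rfl hP4 hM hCM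
    exact BddLett.hasLettering_of_GLett gl
end

section
/- Let G = H[G_v : v ∈ V(H)] be an inflation of a graph H by nonempty graphs G_v, and suppose G contains no induced subgraph isomorphic to pK₂ and no induced subgraph isomorphic to the complement of qK₂. Let A = {v ∈ V(H) : G_v is neither a complete graph nor an edgeless graph}. Then the induced subgraph H[A] contains no clique of size q and no independent set of size p. -/
/-- `G` is (isomorphic to) the inflation `H[G_v : v ∈ V(H)]`, witnessed by the
surjection `φ` sending each vertex of `G` to the vertex of `H` it inflates:
the (nonempty) graphs `G_v` are the induced subgraphs on the fibers of `φ`,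
and between different fibers the adjacency is governed by `H`. -/
def IsInflation {V U : Type*} (G : SimpleGraph V) (H : SimpleGraph U) (φ : V → U) : Prop :=
  Function.Surjective φ ∧ ∀ u v : V, φ u ≠ φ v → (G.Adj u v ↔ H.Adj (φ u) (φ v))

open SimpleGraph

namespace IsInflation

variable {V U : Type*} {G : SimpleGraph V} {H : SimpleGraph U} {φ : V → U}

lemma compl (hinf : IsInflation G H φ) : IsInflation Gᶜ Hᶜ φ := by
  refine ⟨hinf.1, fun u v huv => ?_⟩
  have hne : u ≠ v := fun h => huv (congrArg φ h)
  simp [compl_adj, hne, huv, hinf.2 u v huv]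

lemma nonempty_matchingGraph_embedding (hinf : IsInflation G H φ) {S : Finset U}
    (hindep : H.IsIndepSet S) (hedge : ∀ u ∈ S, ∃ x y : V, φ x = u ∧ φ y = u ∧ G.Adj x y) :
    Nonempty (matchingGraph S.card ↪g G) := by
  let u : Fin S.card → U := fun i => S.equivFin.symm i
  have hu : Function.Injective u := Subtype.coe_injective.comp S.equivFin.symm.injective
  choose x y hx hy hxy using fun i => hedge (u i) (S.equivFin.symm i).2
  let f : Fin S.card × Fin 2 → V := fun a => ![x a.1, y a.1] a.2
  have hφf : ∀ a, φ (f a) = u a.1 := by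
    rintro ⟨i, c⟩
    fin_cases c
    exacts [hx i, hy i]
  have hadj : ∀ a b, G.Adj (f a) (f b) ↔ (matchingGraph S.card).Adj a b := by
    rintro ⟨i, c⟩ ⟨j, d⟩
    by_cases hij : i = j
    · subst hij
      fin_cases c <;> fin_cases d <;>
        simp [f, matchingGraph, hxy i, (hxy i).symm]
    · have hne : u i ≠ u j := hu.ne hij
      have hφne : φ (f (i, c)) ≠ φ (f (j, d)) := by rwa [hφf, hφf]
      rw [hinf.2 _ _ hφne, hφf, hφf]
      exact iff_of_false (hindep (S.equivFin.symm i).2 (S.equivFin.symm j).2 hne)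
        fun h => hij h.1
  have hinj : Function.Injective f := by
    intro a b hab
    have h1 : a.1 = b.1 := hu (by rw [← hφf, ← hφf, hab])
    by_contra hne
    have h2 : a.2 ≠ b.2 := fun h2 => hne (Prod.ext h1 h2)
    exact ((hadj a b).2 ⟨h1, h2⟩).ne hab
  exact ⟨⟨⟨f, hinj⟩, hadj _ _⟩⟩

end IsInflation

theorem nonhomogeneous_modules_ramsey_general (V U : Type)
    (G : SimpleGraph V) (H : SimpleGraph U) (φ : V → U)
    (hinf : IsInflation G H φ) (p q : ℕ)
    (hp : IsEmpty (matchingGraph p ↪g G))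
    (hq : IsEmpty ((matchingGraph q)ᶜ ↪g G))
    (A : Set U)
    (hA : A = {u : U | (∃ x y : V, φ x = u ∧ φ y = u ∧ G.Adj x y) ∧
      (∃ x y : V, φ x = u ∧ φ y = u ∧ x ≠ y ∧ ¬ G.Adj x y)}) :
    (¬ ∃ S : Finset U, ↑S ⊆ A ∧ S.card = q ∧ H.IsClique ↑S) ∧
      (¬ ∃ S : Finset U, ↑S ⊆ A ∧ S.card = p ∧
        (∀ u ∈ S, ∀ v ∈ S, u ≠ v → ¬ H.Adj u v)) := by
  subst hA
  constructor
  · rintro ⟨S, hSA, rfl, hclique⟩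
    have hedge : ∀ u ∈ S, ∃ x y : V, φ x = u ∧ φ y = u ∧ Gᶜ.Adj x y := fun u hu =>
      let ⟨x, y, hx, hy, hne, hnadj⟩ := (hSA hu).2
      ⟨x, y, hx, hy, (compl_adj G x y).2 ⟨hne, hnadj⟩⟩
    obtain ⟨e⟩ :=
      hinf.compl.nonempty_matchingGraph_embedding ((isIndepSet_compl H).2 hclique) hedge
    exact hq.false (compl_compl G ▸ Embedding.complEquiv e)
  · rintro ⟨S, hSA, rfl, hindep⟩
    obtain ⟨e⟩ := hinf.nonempty_matchingGraph_embedding hindep fun u hu => (hSA hu).1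
    exact hp.false e

/-- In an inflation `G = H[G_v]` with no induced `pK₂` and no induced `(qK₂)ᶜ`,
the set `A` of vertices of `H` inflated by non-homogeneous modules (fibers that
are neither complete nor edgeless) spans no clique of size `q` and no
independent set of size `p` in `H`. -/
theorem nonhomogeneous_modules_ramsey (V U : Type) [Fintype V] [Fintype U]
    (G : SimpleGraph V) (H : SimpleGraph U) (φ : V → U)
    (hinf : IsInflation G H φ) (p q : ℕ)
    (hp : IsEmpty (matchingGraph p ↪g G))
    (hq : IsEmpty ((matchingGraph q)ᶜ ↪g G))
    (A : Set U)
    (hA : A = {u : U | (∃ x y : V, φ x = u ∧ φ y = u ∧ G.Adj x y) ∧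
      (∃ x y : V, φ x = u ∧ φ y = u ∧ x ≠ y ∧ ¬ G.Adj x y)}) :
    (¬ ∃ S : Finset U, ↑S ⊆ A ∧ S.card = q ∧ H.IsClique ↑S) ∧
      (¬ ∃ S : Finset U, ↑S ⊆ A ∧ S.card = p ∧
        (∀ u ∈ S, ∀ v ∈ S, u ≠ v → ¬ H.Adj u v)) :=
  nonhomogeneous_modules_ramsey_general V U G H φ hinf p q hp hq A hA
end
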